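/- arXiv:2305.06854 — 2 statements merged into one kernel-verified Lean document; each statement's English description precedes it below -/
import Mathlib

section
/- (Gluing lemma for connected tree labellings.) Let T be a finite tree in which every node p carries a finite set of variables χ(p), such that for every variable v the set of nodes p with v ∈ χ(p) induces a connected subtree of T. Suppose each node p is assigned a tuple t_p over χ(p) such that for every edge {p, q} of T the tuples t_p and t_q agree on χ(p) ∩ χ(q). Then there exists a single tuple t over ⋃_p χ(p) with t|_{χ(p)} = t_p for every node p. -/
namespace Datalog

/-- A tuple over a set of variables `V`: an assignment of a constant to each variable of `V`. -/
def Tuple (V : Set ℕ) : Type := V → ℕ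

/-- The restriction `σ|_V` of a substitution `σ` to the variables `V`. -/
def restrictT (V : Set ℕ) (σ : ℕ → ℕ) : Tuple V := fun v => σ v.1

/-- Extension of a tuple to a total substitution (an arbitrary default value
outside of its domain; all uses below only depend on values inside the domain). -/
noncomputable def extendT {V : Set ℕ} (t : Tuple V) : ℕ → ℕ := fun v =>
  letI := Classical.propDecidable (v ∈ V)
  if h : v ∈ V then t ⟨v, h⟩ else 0

/-- Two tuples agree on every variable on which both are defined. -/
def agreeOn {Vp Vq : Set ℕ} (t : Tuple Vp) (s : Tuple Vq) : Prop :=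
  ∀ v (h1 : v ∈ Vp) (h2 : v ∈ Vq), t ⟨v, h1⟩ = s ⟨v, h2⟩

/-- The natural join `⋈_p R_p` of a family of relations `R p` of tuples over `χ p`:
the set of tuples over `⋃ p, χ p` whose restriction to each `χ p` lies in `R p`. -/
def natJoin {ι : Type} (χ : ι → Set ℕ) (R : ∀ p, Set (Tuple (χ p))) :
    Set (Tuple (⋃ p, χ p)) :=
  { t | ∀ p, restrictT (χ p) (extendT t) ∈ R p }

/-- The projection `π_O` of a relation: restriction of each tuple to the variables `O`. -/
noncomputable def projT {V : Set ℕ} (O : Set ℕ) (Rel : Set (Tuple V)) : Set (Tuple O) :=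
  (fun t : Tuple V => restrictT O (extendT t)) '' Rel

/-- The semijoin `R_p ⋉ R_q`: tuples of `R_p` for which some tuple of `R_q`
agrees with them on the common variables. -/
def semijoin {Vp Vq : Set ℕ} (Rp : Set (Tuple Vp)) (Rq : Set (Tuple Vq)) : Set (Tuple Vp) :=
  { t ∈ Rp | ∃ s ∈ Rq, agreeOn t s }

/-- A rooted tree on the node type `ι`, given by a parent function under which
every node reaches the root. -/
structure RootedTree (ι : Type) where
  root : ι
  parent : ι → ι
  parent_root : parent root = root
  reaches_root : ∀ p, ∃ n, parent^[n] p = root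

namespace RootedTree

variable {ι : Type}

/-- `p` and `q` are joined by an edge of the tree. -/
def Adj (T : RootedTree ι) (p q : ι) : Prop :=
  p ≠ q ∧ (T.parent p = q ∨ T.parent q = p)

/-- `c` is a child of `p`. -/
def childOf (T : RootedTree ι) (c p : ι) : Prop :=
  T.parent c = p ∧ c ≠ T.root

/-- The set of nodes of the subtree `T_p` rooted at `p`. -/
def descendants (T : RootedTree ι) (p : ι) : Set ι :=
  { q | ∃ n, T.parent^[n] q = p }

/-- The set of nodes `S` induces a connected subtree of `T`: it has a topmost
node reachable from every node of `S` along a parent path staying inside `S`. -/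
def ConnSubtree (T : RootedTree ι) (S : Set ι) : Prop :=
  ∃ top ∈ S, ∀ p ∈ S, ∃ n, T.parent^[n] p = top ∧ ∀ m ≤ n, T.parent^[m] p ∈ S

end RootedTree

/-- gluing lemma for connected tree labellings: if every variable
induces a connected subtree of node labels, and the tuples at the nodes agree
across every edge, then they glue to a single tuple over all the variables. -/
theorem gluing (ι : Type) [Fintype ι] (T : RootedTree ι) (χ : ι → Set ℕ)
    (hfin : ∀ p, (χ p).Finite)
    (hconn : ∀ v : ℕ, (∃ p, v ∈ χ p) → T.ConnSubtree { p | v ∈ χ p })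
    (t : ∀ p, Tuple (χ p))
    (hagree : ∀ p q, T.Adj p q → agreeOn (t p) (t q)) :
    ∃ u : Tuple (⋃ p, χ p), ∀ p, restrictT (χ p) (extendT u) = t p := by
  classical
  have key : ∀ v (p q : ι) (hp : v ∈ χ p) (hq : v ∈ χ q),
      t p ⟨v, hp⟩ = t q ⟨v, hq⟩ := by
    intro v p q hp hq
    obtain ⟨top, htop, hreach⟩ := hconn v ⟨p, hp⟩
    suffices H : ∀ r (hr : v ∈ χ r), t r ⟨v, hr⟩ = t top ⟨v, htop⟩ by
      rw [H p hp, H q hq]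
    intro r hr
    obtain ⟨n, hn, hmem⟩ := hreach r hr
    clear hp hq
    induction n generalizing r with
    | zero =>
      simp only [Function.iterate_zero, id] at hn
      subst hn; rfl
    | succ n ih =>
      have hq' : v ∈ χ (T.parent r) := by
        have := hmem 1 (by omega)
        simpa using this
      have step : t r ⟨v, hr⟩ = t (T.parent r) ⟨v, hq'⟩ := by
        by_cases h : r = T.parent r
        · revert hq'
          rw [← h]
          intro hq'
          rfl
        · exact hagree r (T.parent r) ⟨h, Or.inl rfl⟩ v hr hq'
      rw [step]
      apply ih (T.parent r) hq'
      · rw [← Function.iterate_succ_apply]; exact hn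
      · intro m hm
        have := hmem (m + 1) (by omega)
        rw [Function.iterate_succ_apply] at this
        exact this
  refine ⟨fun v => t (Classical.choose (Set.mem_iUnion.mp v.2))
      ⟨v.1, Classical.choose_spec (Set.mem_iUnion.mp v.2)⟩, ?_⟩
  intro p
  funext x
  have hx : x.1 ∈ ⋃ p, χ p := Set.mem_iUnion.mpr ⟨p, x.2⟩
  show (if h : x.1 ∈ ⋃ p, χ p then _ else 0) = t p x
  rw [dif_pos hx]
  rw [key x.1 _ p (Classical.choose_spec (Set.mem_iUnion.mp hx)) x.2]

end Datalog
end

section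
/- (Semijoin invariance and the full reducer.) Let T be a join tree with a relation R_p over χ(p) at each node. (i) For any two adjacent nodes p, q, replacing R_p by R_p ⋉ R_q leaves the global natural join ⋈_u R_u unchanged. (ii) If the relations are updated by a bottom-up pass (every node is semijoined with each of its children, children processed before their parents) followed by a top-down pass (every non-root node is semijoined with its parent, parents processed before their children), then the resulting relations R′_p are fully reduced: R′_p = π_{χ(p)}( ⋈_u R_u ) for every node p, i.e., every remaining tuple extends to a tuple of the global join, and the global join is unchanged. -/
namespace Datalog

namespace RootedTree

variable {ι : Type}

lemma iter_root (T : RootedTree ι) (n : ℕ) : T.parent^[n] T.root = T.root := by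
  induction n with
  | zero => rfl
  | succ n ih => rw [Function.iterate_succ_apply, T.parent_root, ih]

open Classical in
noncomputable def depth (T : RootedTree ι) (p : ι) : ℕ := Nat.find (T.reaches_root p)

lemma iter_depth (T : RootedTree ι) (p : ι) : T.parent^[T.depth p] p = T.root := by
  classical exact Nat.find_spec (T.reaches_root p)

lemma depth_le (T : RootedTree ι) {p : ι} {m : ℕ} (h : T.parent^[m] p = T.root) :
    T.depth p ≤ m := by
  classical exact Nat.find_le h

lemma depth_root (T : RootedTree ι) : T.depth T.root = 0 :=
  Nat.le_zero.1 (T.depth_le (by rfl))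

lemma eq_root_of_depth_eq_zero (T : RootedTree ι) {p : ι} (h : T.depth p = 0) : p = T.root := by
  have := T.iter_depth p; rwa [h] at this

lemma iter_eq_root_of_ge (T : RootedTree ι) {p : ι} {m : ℕ} (h : T.depth p ≤ m) :
    T.parent^[m] p = T.root := by
  have : T.parent^[m - T.depth p + T.depth p] p = T.root := by
    rw [Function.iterate_add_apply]
    rw [T.iter_depth, T.iter_root]
  rwa [Nat.sub_add_cancel h] at this

lemma depth_iter (T : RootedTree ι) (m : ℕ) (p : ι) :
    T.depth (T.parent^[m] p) = T.depth p - m := by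
  rcases le_or_gt (T.depth p) m with h | h
  · rw [T.iter_eq_root_of_ge h, depth_root, Nat.sub_eq_zero_of_le h]
  · apply le_antisymm
    · apply T.depth_le
      rw [← Function.iterate_add_apply, Nat.sub_add_cancel h.le, T.iter_depth]
    · by_contra hlt
      push_neg at hlt
      have h2 : T.parent^[T.depth (T.parent^[m] p) + m] p = T.root := by
        rw [Function.iterate_add_apply]
        exact T.iter_depth _
      have := T.depth_le h2
      omega

lemma depth_eq_of_iter (T : RootedTree ι) {p q : ι} {m : ℕ} (h : T.parent^[m] q = p)
    (hp : p ≠ T.root) : T.depth q = T.depth p + m := by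
  have hm : m ≤ T.depth q := by
    by_contra hm
    exact hp (by rw [← h]; exact T.iter_eq_root_of_ge (by omega))
  have := T.depth_iter m q
  rw [h] at this
  omega

lemma depth_child (T : RootedTree ι) {c p : ι} (h : T.childOf c p) :
    T.depth c = T.depth p + 1 := by
  have hc : T.depth c ≠ 0 := fun h0 => h.2 (T.eq_root_of_depth_eq_zero h0)
  have := T.depth_iter 1 c
  rw [(show T.parent^[1] c = p from h.1)] at this
  omega

lemma depth_lt_card [Fintype ι] (T : RootedTree ι) (p : ι) : T.depth p < Fintype.card ι := by
  have hinj : Function.Injective (fun i : Fin (T.depth p + 1) => T.parent^[i.1] p) := by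
    intro i j hij
    simp only at hij
    have hi := T.depth_iter i.1 p
    have hj := T.depth_iter j.1 p
    rw [hij] at hi
    have : i.1 = j.1 := by omega
    exact Fin.ext this
  have := Fintype.card_le_of_injective _ hinj
  simpa using this

lemma not_mem_desc_child (T : RootedTree ι) {c p : ι} (h : T.childOf c p) :
    p ∉ T.descendants c := by
  rintro ⟨n, hn⟩
  have := T.depth_eq_of_iter hn h.2
  have := T.depth_child h
  omega

lemma exit_lemma (T : RootedTree ι) {x p : ι} {m a : ℕ} (hm : T.parent^[m] x = p)
    (ha : T.parent^[a] x ∉ T.descendants p) : a > m := by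
  by_contra hle
  push_neg at hle
  exact ha ⟨m - a, by rw [← Function.iterate_add_apply, Nat.sub_add_cancel hle, hm]⟩

lemma child_desc_disjoint (T : RootedTree ι) {c c' p x : ι} (hc : T.childOf c p)
    (hc' : T.childOf c' p) (hne : c ≠ c') (hx : x ∈ T.descendants c) :
    x ∉ T.descendants c' := by
  rintro ⟨b, hb⟩
  obtain ⟨a, ha⟩ := hx
  have hda := T.depth_eq_of_iter ha hc.2
  have hdb := T.depth_eq_of_iter hb hc'.2
  have hdc := T.depth_child hc
  have hdc' := T.depth_child hc'
  have hab : a = b := by omega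
  exact hne (by rw [← ha, ← hb, hab])

lemma desc_cases (T : RootedTree ι) {q p : ι} (h : q ∈ T.descendants p) :
    q = p ∨ ∃ c, T.childOf c p ∧ q ∈ T.descendants c := by
  obtain ⟨n, hn⟩ := h
  induction n using Nat.strong_induction_on generalizing q with
  | _ n ih =>
    match n, hn with
    | 0, hn => exact Or.inl hn
    | (n+1), hn =>
      rw [Function.iterate_succ_apply'] at hn
      rcases eq_or_ne (T.parent^[n] q) p with hcp | hcp
      · exact ih n (by omega) hcp
      · refine Or.inr ⟨T.parent^[n] q, ⟨hn, ?_⟩, ⟨n, rfl⟩⟩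
        intro hroot
        apply hcp
        rw [hroot] at hn
        rw [T.parent_root] at hn
        rw [hroot, hn]

lemma mem_desc_self (T : RootedTree ι) (p : ι) : p ∈ T.descendants p := ⟨0, rfl⟩

lemma desc_root (T : RootedTree ι) (q : ι) : q ∈ T.descendants T.root := T.reaches_root q

end RootedTree

section Key

variable {ι : Type} (T : RootedTree ι) (χ : ι → Set ℕ)

/-- Key connectivity lemma: if `v` occurs both inside the subtree of a child `c`
of `p` and outside it, then `v` occurs at `c` and at `p`. -/
lemma key_conn (hconn : ∀ v : ℕ, (∃ p, v ∈ χ p) → T.ConnSubtree { p | v ∈ χ p })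
    {p c x y : ι} (hc : T.childOf c p) (hx : x ∈ T.descendants c)
    (hy : y ∉ T.descendants c) {v : ℕ} (hvx : v ∈ χ x) (hvy : v ∈ χ y) :
    v ∈ χ c ∧ v ∈ χ p := by
  obtain ⟨top, htop, hpath⟩ := hconn v ⟨x, hvx⟩
  obtain ⟨n, hn, hS⟩ := hpath x hvx
  obtain ⟨n', hn', _⟩ := hpath y hvy
  have htopnot : top ∉ T.descendants c := by
    rintro ⟨k, hk⟩
    exact hy ⟨k + n', by rw [Function.iterate_add_apply, hn', hk]⟩
  obtain ⟨m, hm⟩ := hx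
  have hmn : n > m := T.exit_lemma hm (by rw [hn]; exact htopnot)
  constructor
  · have := hS m (by omega)
    rwa [hm] at this
  · have := hS (m + 1) (by omega)
    rw [Function.iterate_succ_apply', hm, hc.1] at this
    exact this

/-- restriction to a subset of the union commutes through `extendT ∘ restrictT`. -/
lemma restrict_extend (σ : ℕ → ℕ) (W : Set ℕ) (hW : ∀ v ∈ W, v ∈ ⋃ p, χ p) :
    restrictT W (extendT (restrictT (⋃ p, χ p) σ)) = restrictT W σ := by
  funext vv
  show extendT (restrictT (⋃ p, χ p) σ) vv.1 = σ vv.1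
  unfold extendT
  rw [dif_pos (hW vv.1 vv.2)]
  rfl

variable [Fintype ι]
variable (R R1 R2 : ∀ p, Set (Tuple (χ p)))

/-- Claim A: every tuple surviving the bottom-up pass at `p` extends to a
substitution realizing all relations of the subtree of `p`. -/
lemma claimA
    (hconn : ∀ v : ℕ, (∃ p, v ∈ χ p) → T.ConnSubtree { p | v ∈ χ p })
    (hR1 : ∀ p, R1 p = { t ∈ R p | ∀ c, T.childOf c p → ∃ s ∈ R1 c, agreeOn t s }) :
    ∀ k p, Fintype.card ι - T.depth p ≤ k → ∀ t ∈ R1 p, ∃ σ : ℕ → ℕ,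
      (∀ v (hv : v ∈ χ p), σ v = t ⟨v, hv⟩) ∧
      ∀ q ∈ T.descendants p, restrictT (χ q) σ ∈ R1 q := by
  intro k
  induction k with
  | zero =>
    intro p hp
    exact absurd hp (by have := T.depth_lt_card p; omega)
  | succ k ih =>
    intro p hp t ht
    have htR : t ∈ R p ∧ ∀ c, T.childOf c p → ∃ s ∈ R1 c, agreeOn t s := by
      rw [hR1 p] at ht; exact ht
    have hch : ∀ c, ∃ σc : ℕ → ℕ, T.childOf c p →
        (∀ v (h1 : v ∈ χ p) (h2 : v ∈ χ c), σc v = t ⟨v, h1⟩) ∧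
        ∀ q ∈ T.descendants c, restrictT (χ q) σc ∈ R1 q := by
      intro c
      by_cases hc : T.childOf c p
      · obtain ⟨s, hs, hagree⟩ := htR.2 c hc
        have hdc := T.depth_child hc
        have hcard := T.depth_lt_card p
        obtain ⟨σc, hσ1, hσ2⟩ := ih c (by omega) s hs
        exact ⟨σc, fun _ => ⟨fun v h1 h2 => by rw [hσ1 v h2]; exact (hagree v h1 h2).symm, hσ2⟩⟩
      · exact ⟨fun _ => 0, fun h => absurd h hc⟩
    choose σs hσs using hch
    classical
    let σ : ℕ → ℕ := fun v =>
      if hv : v ∈ χ p then t ⟨v, hv⟩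
      else if hc : ∃ c, T.childOf c p ∧ ∃ q, q ∈ T.descendants c ∧ v ∈ χ q
        then σs hc.choose v else 0
    have hσp : ∀ v (hv : v ∈ χ p), σ v = t ⟨v, hv⟩ := fun v hv => dif_pos hv
    have hcons : ∀ c, T.childOf c p → ∀ q, q ∈ T.descendants c → ∀ v, v ∈ χ q →
        σ v = σs c v := by
      intro c hc q hq v hv
      by_cases hvp : v ∈ χ p
      · have hvc : v ∈ χ c := (key_conn T χ hconn hc hq (T.not_mem_desc_child hc) hv hvp).1
        rw [hσp v hvp]
        exact ((hσs c hc).1 v hvp hvc).symm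
      · have hex : ∃ c', T.childOf c' p ∧ ∃ q', q' ∈ T.descendants c' ∧ v ∈ χ q' :=
          ⟨c, hc, q, hq, hv⟩
        have hval : σ v = σs hex.choose v := (dif_neg hvp).trans (dif_pos hex)
        obtain ⟨hc', q', hq', hv'⟩ := hex.choose_spec
        rcases eq_or_ne hex.choose c with he | he
        · rw [hval, he]
        · exfalso
          have hq'disj : q' ∉ T.descendants c := T.child_desc_disjoint hc' hc he hq'
          exact hvp (key_conn T χ hconn hc hq hq'disj hv hv').2
    refine ⟨σ, hσp, ?_⟩
    intro q hq
    rcases T.desc_cases hq with rfl | ⟨c, hc, hqc⟩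
    · have heq : restrictT (χ q) σ = t := funext fun vv => hσp vv.1 vv.2
      rw [heq]; exact ht
    · have heq : restrictT (χ q) σ = restrictT (χ q) (σs c) :=
        funext fun vv => hcons c hc q hqc vv.1 vv.2
      rw [heq]; exact (hσs c hc).2 q hqc

/-- Bottom-up invariance: projections of the global join survive the bottom-up pass. -/
lemma joinProjR1
    (hR1 : ∀ p, R1 p = { t ∈ R p | ∀ c, T.childOf c p → ∃ s ∈ R1 c, agreeOn t s }) :
    ∀ k p, Fintype.card ι - T.depth p ≤ k →
    ∀ u ∈ natJoin χ R, restrictT (χ p) (extendT u) ∈ R1 p := by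
  intro k
  induction k with
  | zero =>
    intro p hp
    exact absurd hp (by have := T.depth_lt_card p; omega)
  | succ k ih =>
    intro p hp u hu
    rw [hR1 p]
    refine ⟨hu p, ?_⟩
    intro c hc
    have hdc := T.depth_child hc
    have hcard := T.depth_lt_card p
    exact ⟨restrictT (χ c) (extendT u), ih c (by omega) u hu, fun v h1 h2 => rfl⟩

/-- Top-down invariance: projections of the global join survive the top-down pass. -/
lemma joinProjR2
    (hR1 : ∀ p, R1 p = { t ∈ R p | ∀ c, T.childOf c p → ∃ s ∈ R1 c, agreeOn t s })
    (hR2root : R2 T.root = R1 T.root)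
    (hR2 : ∀ p, p ≠ T.root → R2 p = { t ∈ R1 p | ∃ s ∈ R2 (T.parent p), agreeOn t s }) :
    ∀ n p, T.depth p ≤ n →
    ∀ u ∈ natJoin χ R, restrictT (χ p) (extendT u) ∈ R2 p := by
  intro n
  induction n with
  | zero =>
    intro p hp u hu
    have hroot : p = T.root := T.eq_root_of_depth_eq_zero (Nat.le_zero.1 hp)
    rw [hroot, hR2root]
    exact joinProjR1 T χ R R1 hR1 (Fintype.card ι) T.root (Nat.sub_le _ _) u hu
  | succ n ih =>
    intro p hp u hu
    rcases eq_or_ne p T.root with heq | hne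
    · rw [heq, hR2root]
      exact joinProjR1 T χ R R1 hR1 (Fintype.card ι) T.root (Nat.sub_le _ _) u hu
    · rw [hR2 p hne]
      refine ⟨joinProjR1 T χ R R1 hR1 (Fintype.card ι) p (Nat.sub_le _ _) u hu, ?_⟩
      have hdp : T.depth (T.parent p) ≤ n := by
        have h1 := T.depth_iter 1 p
        have h0 : T.depth p ≠ 0 := fun h => hne (T.eq_root_of_depth_eq_zero h)
        simp only [Function.iterate_one] at h1
        omega
      exact ⟨restrictT (χ (T.parent p)) (extendT u), ih (T.parent p) hdp u hu,
        fun v h1 h2 => rfl⟩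

/-- Claim B: after both passes, every surviving tuple extends to the global join. -/
lemma claimB
    (hconn : ∀ v : ℕ, (∃ p, v ∈ χ p) → T.ConnSubtree { p | v ∈ χ p })
    (hR1 : ∀ p, R1 p = { t ∈ R p | ∀ c, T.childOf c p → ∃ s ∈ R1 c, agreeOn t s })
    (hR2root : R2 T.root = R1 T.root)
    (hR2 : ∀ p, p ≠ T.root → R2 p = { t ∈ R1 p | ∃ s ∈ R2 (T.parent p), agreeOn t s }) :
    ∀ n p, T.depth p ≤ n → ∀ t ∈ R2 p, t ∈ projT (χ p) (natJoin χ R) := by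
  have hsub1 : ∀ p, R1 p ⊆ R p := fun p => by rw [hR1 p]; exact fun t ht => ht.1
  have hWp : ∀ p, ∀ v ∈ χ p, v ∈ ⋃ q, χ q := fun p v hv => Set.mem_iUnion_of_mem p hv
  have hrootcase : ∀ t ∈ R1 T.root, t ∈ projT (χ T.root) (natJoin χ R) := by
    intro t ht
    obtain ⟨σ, hσ1, hσ2⟩ :=
      claimA T χ R R1 hconn hR1 (Fintype.card ι) T.root (Nat.sub_le _ _) t ht
    refine ⟨restrictT (⋃ p, χ p) σ, ?_, ?_⟩
    · intro q
      rw [restrict_extend χ σ (χ q) (hWp q)]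
      exact hsub1 q (hσ2 q (T.desc_root q))
    · show restrictT (χ T.root) (extendT (restrictT (⋃ p, χ p) σ)) = t
      rw [restrict_extend χ σ (χ T.root) (hWp T.root)]
      exact funext fun vv => hσ1 vv.1 vv.2
  intro n
  induction n with
  | zero =>
    intro p hp t ht
    have hroot : p = T.root := T.eq_root_of_depth_eq_zero (Nat.le_zero.1 hp)
    subst hroot
    rw [hR2root] at ht
    exact hrootcase t ht
  | succ n ih =>
    intro p hp t ht
    rcases eq_or_ne p T.root with heq | hne
    · subst heq
      rw [hR2root] at ht
      exact hrootcase t ht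
    · rw [hR2 p hne] at ht
      obtain ⟨ht1, s, hs, hag⟩ := ht
      have hdp : T.depth (T.parent p) ≤ n := by
        have h1 := T.depth_iter 1 p
        have h0 : T.depth p ≠ 0 := fun h => hne (T.eq_root_of_depth_eq_zero h)
        simp only [Function.iterate_one] at h1
        omega
      obtain ⟨u, hu, hus⟩ := ih (T.parent p) hdp s hs
      obtain ⟨σ, hσ1, hσ2⟩ :=
        claimA T χ R R1 hconn hR1 (Fintype.card ι) p (Nat.sub_le _ _) t ht1
      classical
      let θ : ℕ → ℕ := fun v =>
        if _ : ∃ q, q ∈ T.descendants p ∧ v ∈ χ q then σ v else extendT u v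
      have hpc : T.childOf p (T.parent p) := ⟨rfl, hne⟩
      have hθR : ∀ q, restrictT (χ q) θ ∈ R q := by
        intro q
        by_cases hq : q ∈ T.descendants p
        · have heq : restrictT (χ q) θ = restrictT (χ q) σ :=
            funext fun vv => dif_pos ⟨q, hq, vv.2⟩
          rw [heq]
          exact hsub1 q (hσ2 q hq)
        · have heq : restrictT (χ q) θ = restrictT (χ q) (extendT u) := by
            funext vv
            show θ vv.1 = extendT u vv.1
            by_cases h : ∃ q', q' ∈ T.descendants p ∧ vv.1 ∈ χ q'
            · obtain ⟨q', hq', hv'⟩ := h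
              have hk := key_conn T χ hconn hpc hq' hq hv' vv.2
              have e1 : θ vv.1 = σ vv.1 := dif_pos ⟨q', hq', hv'⟩
              rw [e1, hσ1 vv.1 hk.1, hag vv.1 hk.1 hk.2, ← hus]
              rfl
            · exact dif_neg h
          rw [heq]
          exact hu q
      refine ⟨restrictT (⋃ p, χ p) θ, ?_, ?_⟩
      · intro q
        rw [restrict_extend χ θ (χ q) (hWp q)]
        exact hθR q
      · show restrictT (χ p) (extendT (restrictT (⋃ p, χ p) θ)) = t
        rw [restrict_extend χ θ (χ p) (hWp p)]
        funext vv
        show θ vv.1 = t vv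
        rw [show θ vv.1 = σ vv.1 from dif_pos ⟨p, T.mem_desc_self p, vv.2⟩, hσ1 vv.1 vv.2]

end Key


/-- semijoin invariance and the full reducer: (i) semijoining a
node with an adjacent node leaves the global natural join unchanged; (ii) after
a bottom-up semijoin pass (`R1`, children before parents) followed by a top-down
semijoin pass (`R2`, parents before children), every relation is fully reduced:
`R2 p = π_{χ(p)}(⋈_u R_u)`, and the global join is unchanged. -/
theorem semijoin_full_reducer (ι : Type) [Fintype ι] [DecidableEq ι]
    (T : RootedTree ι) (χ : ι → Set ℕ) (hfin : ∀ p, (χ p).Finite)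
    (hconn : ∀ v : ℕ, (∃ p, v ∈ χ p) → T.ConnSubtree { p | v ∈ χ p })
    (R : ∀ p, Set (Tuple (χ p))) :
    (∀ p q, T.Adj p q →
        natJoin χ (Function.update R p (semijoin (R p) (R q))) = natJoin χ R) ∧
    ∀ R1 R2 : ∀ p, Set (Tuple (χ p)),
      (∀ p, R1 p = { t ∈ R p | ∀ c, T.childOf c p → ∃ s ∈ R1 c, agreeOn t s }) →
      R2 T.root = R1 T.root →
      (∀ p, p ≠ T.root → R2 p = { t ∈ R1 p | ∃ s ∈ R2 (T.parent p), agreeOn t s }) →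
      (∀ p, R2 p = projT (χ p) (natJoin χ R)) ∧ natJoin χ R2 = natJoin χ R := by
  constructor
  · intro p q _hadj
    ext t
    constructor
    · intro ht u
      have hh := ht u
      rcases eq_or_ne u p with rfl | hne
      · rw [Function.update_self] at hh
        exact hh.1
      · rwa [Function.update_of_ne hne] at hh
    · intro ht u
      rcases eq_or_ne u p with rfl | hne
      · rw [Function.update_self]
        exact ⟨ht u, restrictT (χ q) (extendT t), ht q, fun v h1 h2 => rfl⟩
      · rw [Function.update_of_ne hne]
        exact ht u
  · intro R1 R2 hR1 hR2root hR2
    have hsub1 : ∀ p, R1 p ⊆ R p := fun p => by rw [hR1 p]; exact fun t ht => ht.1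
    have hsub2 : ∀ p, R2 p ⊆ R1 p := fun p => by
      rcases eq_or_ne p T.root with rfl | h
      · rw [hR2root]
      · rw [hR2 p h]; exact fun t ht => ht.1
    have hBig : ∀ p, ∀ t ∈ R2 p, t ∈ projT (χ p) (natJoin χ R) := fun p =>
      claimB T χ R R1 R2 hconn hR1 hR2root hR2 (T.depth p) p le_rfl
    have hProj : ∀ u ∈ natJoin χ R, ∀ p, restrictT (χ p) (extendT u) ∈ R2 p :=
      fun u hu p => joinProjR2 T χ R R1 R2 hR1 hR2root hR2 (T.depth p) p le_rfl u hu
    constructor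
    · intro p
      ext t
      constructor
      · exact hBig p t
      · rintro ⟨u, hu, rfl⟩
        exact hProj u hu p
    · ext t
      constructor
      · intro ht p
        exact hsub1 p (hsub2 p (ht p))
      · intro ht p
        exact hProj t ht p


end Datalog
end
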